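/- arXiv:2510.08467 — 3 statements merged into one kernel-verified Lean document; each statement's English description precedes it below -/
import Mathlib

section
/- For all D×D complex matrices H and H′ and all t ∈ ℝ, Duhamel's formula holds: exp(itH) − exp(itH′) = i ∫_0^t exp(i(t−s)H) · (H − H′) · exp(isH′) ds. -/
open NormedSpace

/-! The function `s ↦ exp((t - s) a) exp(s b)` in a real Banach algebra has derivative
`-exp((t - s) a) (a - b) exp(s b)` and runs from `exp(t a)` at `s = 0` to `exp(t b)` at `s = t`,
so the fundamental theorem of calculus gives `exp(t a) - exp(t b)` as the integral of
`exp((t - s) a) (a - b) exp(s b)`. For matrices, take `a = iH`, `b = iH'` and read off an entry. -/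

section BanachAlgebra

variable {𝔸 : Type*} [NormedRing 𝔸] [NormedAlgebra ℝ 𝔸] [CompleteSpace 𝔸]

theorem hasDerivAt_exp_sub_smul (a : 𝔸) (t s : ℝ) :
    HasDerivAt (fun u : ℝ => exp ((t - u) • a)) (-(exp ((t - s) • a) * a)) s := by
  have h := (hasDerivAt_exp_smul_const a (t - s)).scomp s ((hasDerivAt_id s).const_sub t)
  rwa [neg_one_smul] at h

theorem hasDerivAt_exp_sub_smul_mul_exp_smul (a b : 𝔸) (t s : ℝ) :
    HasDerivAt (fun u : ℝ => exp ((t - u) • a) * exp (u • b))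
      (-(exp ((t - s) • a) * (a - b) * exp (s • b))) s := by
  refine ((hasDerivAt_exp_sub_smul a t s).mul (hasDerivAt_exp_smul_const' b s)).congr_deriv ?_
  noncomm_ring

theorem continuous_exp_sub_smul_mul_mul_exp_smul (a c b : 𝔸) (t : ℝ) :
    Continuous fun s : ℝ => exp ((t - s) • a) * c * exp (s • b) :=
  ((continuous_iff_continuousAt.2 fun s => (hasDerivAt_exp_sub_smul a t s).continuousAt).mul
    continuous_const).mul
    (continuous_iff_continuousAt.2 fun s => (hasDerivAt_exp_smul_const b s).continuousAt)

theorem exp_smul_sub_exp_smul_eq_integral (a b : 𝔸) (t : ℝ) :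
    exp (t • a) - exp (t • b) =
      ∫ s in 0..t, exp ((t - s) • a) * (a - b) * exp (s • b) := by
  rw [← neg_neg (∫ s in 0..t, _), ← intervalIntegral.integral_neg,
    intervalIntegral.integral_eq_sub_of_hasDerivAt
      (fun s _ => hasDerivAt_exp_sub_smul_mul_exp_smul a b t s)
      ((continuous_exp_sub_smul_mul_mul_exp_smul a (a - b) b t).neg.intervalIntegrable _ _)]
  simp

theorem ContinuousLinearMap.map_exp_smul_sub_map_exp_smul_eq_integral {F : Type*}
    [NormedAddCommGroup F] [NormedSpace ℝ F] [CompleteSpace F] (L : 𝔸 →L[ℝ] F)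
    (a b : 𝔸) (t : ℝ) :
    L (exp (t • a)) - L (exp (t • b)) =
      ∫ s in 0..t, L (exp ((t - s) • a) * (a - b) * exp (s • b)) := by
  rw [← map_sub, exp_smul_sub_exp_smul_eq_integral, L.intervalIntegral_comp_comm
    ((continuous_exp_sub_smul_mul_mul_exp_smul a (a - b) b t).intervalIntegrable _ _)]

end BanachAlgebra

/-- **Duhamel's formula** for matrix exponentials, stated componentwise:
for all `D × D` complex matrices `H`, `H'` and all `t ∈ ℝ`,
`exp(itH) − exp(itH') = i ∫_0^t exp(i(t−s)H) (H − H') exp(isH') ds`. -/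
theorem duhamel_formula {D : ℕ} (H H' : Matrix (Fin D) (Fin D) ℂ) (t : ℝ) :
    ∀ i j : Fin D,
      (NormedSpace.exp ((Complex.I * (t : ℂ)) • H)
        - NormedSpace.exp ((Complex.I * (t : ℂ)) • H')) i j =
      Complex.I *
        ∫ s in (0:ℝ)..t,
          (NormedSpace.exp ((Complex.I * ((t - s : ℝ) : ℂ)) • H) *
              (H - H') *
            NormedSpace.exp ((Complex.I * ((s : ℝ) : ℂ)) • H')) i j := by
  intro i j
  -- any Banach-algebra norm on the matrices will do; the identity is then read entrywise
  let := Matrix.linftyOpNormedRing (n := Fin D) (α := ℂ)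
  let := Matrix.linftyOpNormedAlgebra (R := ℝ) (n := Fin D) (α := ℂ)
  have hsmul (r : ℝ) (X : Matrix (Fin D) (Fin D) ℂ) :
      (Complex.I * r) • X = r • Complex.I • X := by
    rw [mul_comm, ← smul_smul, Complex.coe_smul]
  simp only [hsmul]
  have key : exp (t • Complex.I • H) i j - exp (t • Complex.I • H') i j =
      ∫ s in 0..t, (exp ((t - s) • Complex.I • H) * (Complex.I • H - Complex.I • H') *
        exp (s • Complex.I • H')) i j :=
    (Matrix.entryLinearMap ℝ ℂ i j).toContinuousLinearMap
      |>.map_exp_smul_sub_map_exp_smul_eq_integral _ _ t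
  simpa [← smul_sub, intervalIntegral.integral_const_mul] using key
end

section
/- Let H and K be D×D Hermitian complex matrices, let O be a D×D complex matrix, and let t ∈ ℝ. Define U(s) = exp(−isH) and, for s ∈ [0,t], V(t,s) = exp(−i(t−s)K). Then V(t,0)† O V(t,0) − U(t)† O U(t) = i ∫_0^t V(t,s)† · [K − H, U(s)† O U(s)] · V(t,s) ds. -/
/-!
With `A = -iH` and `B = -iK` we have `U(s)† X U(s) = exp(-sA) X exp(sA)` and
`V(t,s)† X V(t,s) = exp(-(t-s)B) X exp((t-s)B)`. The function
`F(s) = V(t,s)† U(s)† O U(s) V(t,s)` interpolates between `F(0) = V(t,0)† O V(t,0)` and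
`F(t) = U(t)† O U(t)`. Differentiating the inner conjugation gives the Heisenberg equation
`d/ds Y = [Y, A]`, the outer one contributes `[B, Y]`, so `F'(s) = V† [B - A, Y(s)] V` with
`B - A = -i(K - H)`, and the formula is the fundamental theorem of calculus for `F`.
-/

open scoped Matrix
open NormedSpace

section Ring

variable {𝔸 : Type*} [Ring 𝔸] [Algebra ℝ 𝔸] [TopologicalSpace 𝔸] [IsTopologicalRing 𝔸]

noncomputable def heisenbergPicture (A X : 𝔸) (s : ℝ) : 𝔸 :=
  exp (-s • A) * X * exp (s • A)

@[simp]
lemma heisenbergPicture_zero (A X : 𝔸) : heisenbergPicture A X 0 = X := by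
  simp [heisenbergPicture]

lemma heisenbergPicture_smul {𝕜 : Type*} [CommSemiring 𝕜] [Module 𝕜 𝔸] [IsScalarTower 𝕜 𝔸 𝔸]
    [SMulCommClass 𝕜 𝔸 𝔸] (A X : 𝔸) (c : 𝕜) (s : ℝ) :
    heisenbergPicture A (c • X) s = c • heisenbergPicture A X s := by
  simp only [heisenbergPicture, mul_smul_comm, smul_mul_assoc]

lemma heisenbergPicture_commutator [T2Space 𝔸] (A X : 𝔸) (s : ℝ) :
    heisenbergPicture A (X * A - A * X) s =
      heisenbergPicture A X s * A - A * heisenbergPicture A X s := by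
  have hl : Commute A (exp (-s • A)) := ((Commute.refl A).smul_right _).exp_right
  have hr : Commute A (exp (s • A)) := ((Commute.refl A).smul_right _).exp_right
  simp only [heisenbergPicture, mul_sub, sub_mul, mul_assoc, hr.eq]
  simp only [← mul_assoc, hl.eq]

end Ring

section Banach

variable {𝔸 : Type*} [NormedRing 𝔸] [NormedAlgebra ℝ 𝔸] [CompleteSpace 𝔸]

lemma Continuous.heisenbergPicture (A : 𝔸) {Y : ℝ → 𝔸} {f : ℝ → ℝ} (hY : Continuous Y)
    (hf : Continuous f) : Continuous fun s => heisenbergPicture A (Y s) (f s) :=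
  have hexp : Continuous fun r : ℝ => exp (r • A) := (differentiable_exp_smul_const ℝ A).continuous
  ((hexp.comp hf.neg).mul hY).mul (hexp.comp hf)

lemma continuous_heisenbergPicture_commutator (A B C X : 𝔸) (t : ℝ) :
    Continuous fun s =>
      heisenbergPicture B (C * heisenbergPicture A X s - heisenbergPicture A X s * C) (t - s) :=
  have hY : Continuous (heisenbergPicture A X) := continuous_const.heisenbergPicture A continuous_id
  ((continuous_const.mul hY).sub (hY.mul continuous_const)).heisenbergPicture B
    (continuous_sub_left t)

lemma HasDerivAt.heisenbergPicture (A : 𝔸) {Y : ℝ → 𝔸} {Y' : 𝔸} {f : ℝ → ℝ} {f' s : ℝ}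
    (hY : HasDerivAt Y Y' s) (hf : HasDerivAt f f' s) :
    HasDerivAt (fun s => heisenbergPicture A (Y s) (f s))
      (heisenbergPicture A (Y' + f' • (Y s * A - A * Y s)) (f s)) s := by
  have hl := (hasDerivAt_exp_smul_const A (-f s)).scomp s hf.neg
  have hr := (hasDerivAt_exp_smul_const' A (f s)).scomp s hf
  refine ((hl.mul hY).mul hr).congr_deriv ?_
  simp only [_root_.heisenbergPicture, Function.comp_apply, Pi.neg_apply, Pi.mul_apply, neg_smul,
    neg_mul, smul_sub, smul_mul_assoc, mul_smul_comm, mul_add, add_mul, mul_sub, sub_mul, mul_assoc]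
  abel

lemma hasDerivAt_heisenbergPicture (A X : 𝔸) (s : ℝ) :
    HasDerivAt (heisenbergPicture A X)
      (heisenbergPicture A X s * A - A * heisenbergPicture A X s) s := by
  simpa [heisenbergPicture_commutator] using
    (hasDerivAt_const s X).heisenbergPicture A (hasDerivAt_id s)

theorem heisenbergPicture_sub_heisenbergPicture (A B X : 𝔸) (t : ℝ) :
    heisenbergPicture A X t - heisenbergPicture B X t =
      ∫ s in 0..t, heisenbergPicture B
        ((B - A) * heisenbergPicture A X s - heisenbergPicture A X s * (B - A)) (t - s) := by
  have hderiv (s : ℝ) :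
      HasDerivAt (fun s => heisenbergPicture B (heisenbergPicture A X s) (t - s))
        (heisenbergPicture B
          ((B - A) * heisenbergPicture A X s - heisenbergPicture A X s * (B - A)) (t - s)) s := by
    refine ((hasDerivAt_heisenbergPicture A X s).heisenbergPicture B
      ((hasDerivAt_id' s).const_sub t)).congr_deriv ?_
    rw [neg_one_smul]
    congr 1
    noncomm_ring
  rw [intervalIntegral.integral_eq_sub_of_hasDerivAt (fun s _ => hderiv s)
    ((continuous_heisenbergPicture_commutator A B (B - A) X t).intervalIntegrable 0 t)]
  simp

end Banach

namespace Matrix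

variable {n : Type*} [Fintype n] [DecidableEq n]

lemma IsHermitian.conjTranspose_exp_mul_mul_exp {H : Matrix n n ℂ} (hH : H.IsHermitian)
    (X : Matrix n n ℂ) (s : ℝ) :
    (NormedSpace.exp ((-(Complex.I * s)) • H))ᴴ * X * NormedSpace.exp ((-(Complex.I * s)) • H) =
      heisenbergPicture ((-Complex.I) • H) X s := by
  have hsmul (r : ℝ) : (-(Complex.I * r)) • H = r • ((-Complex.I) • H) := by
    rw [RCLike.real_smul_eq_coe_smul (K := ℂ), smul_smul, mul_neg, mul_comm]
    rfl
  rw [heisenbergPicture, ← hsmul, ← hsmul, ← exp_conjTranspose, conjTranspose_smul, hH.eq]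
  simp

section LinftyOp

-- Any norm would do: all of them induce the product topology, and hence the same integral.
attribute [local instance] Matrix.linftyOpNormedRing Matrix.linftyOpNormedAlgebra

lemma intervalIntegral_apply {f : ℝ → Matrix n n ℂ} (hf : Continuous f) (a b : ℝ) (i j : n) :
    (∫ s in a..b, f s) i j = ∫ s in a..b, f s i j :=
  ((entryLinearMap ℝ ℂ i j).toContinuousLinearMap.intervalIntegral_comp_comm
    (hf.intervalIntegrable a b)).symm

lemma heisenbergPicture_sub_heisenbergPicture_apply (A B X : Matrix n n ℂ) (t : ℝ) (i j : n) :
    heisenbergPicture A X t i j - heisenbergPicture B X t i j =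
      ∫ s in 0..t, heisenbergPicture B
        ((B - A) * heisenbergPicture A X s - heisenbergPicture A X s * (B - A)) (t - s) i j :=
  (congrArg (· i j) (heisenbergPicture_sub_heisenbergPicture A B X t)).trans
    (intervalIntegral_apply (continuous_heisenbergPicture_commutator A B (B - A) X t) 0 t i j)

end LinftyOp

end Matrix

/-- **Duhamel's formula for Heisenberg evolution of observables**, stated componentwise.
Let `H`, `K` be `D × D` Hermitian matrices, `O` a `D × D` matrix and `t ∈ ℝ`.  With
`U s = exp(−isH)` and `V t s = exp(−i(t−s)K)` one has
`V(t,0)† O V(t,0) − U(t)† O U(t) = i ∫_0^t V(t,s)† [K − H, U(s)† O U(s)] V(t,s) ds`. -/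
theorem duhamel_heisenberg {D : ℕ} (H K O : Matrix (Fin D) (Fin D) ℂ)
    (hH : H.IsHermitian) (hK : K.IsHermitian) (t : ℝ) :
    letI U : ℝ → Matrix (Fin D) (Fin D) ℂ :=
      fun s => NormedSpace.exp ((-(Complex.I * (s : ℂ))) • H)
    letI V : ℝ → ℝ → Matrix (Fin D) (Fin D) ℂ :=
      fun t s => NormedSpace.exp ((-(Complex.I * ((t - s : ℝ) : ℂ))) • K)
    ∀ i j : Fin D,
      ((V t 0)ᴴ * O * V t 0 - (U t)ᴴ * O * U t) i j =
      Complex.I *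
        ∫ s in (0:ℝ)..t,
          ((V t s)ᴴ *
              ((K - H) * ((U s)ᴴ * O * U s) - ((U s)ᴴ * O * U s) * (K - H)) *
            V t s) i j := by
  intro i j
  beta_reduce
  have hV (s : ℝ) (X : Matrix (Fin D) (Fin D) ℂ) := hK.conjTranspose_exp_mul_mul_exp X (t - s)
  simp only [hH.conjTranspose_exp_mul_mul_exp, hV]
  set A := (-Complex.I) • H with hA
  set B := (-Complex.I) • K with hB
  have hKH : K - H = Complex.I • (B - A) := by
    rw [hA, hB, ← smul_sub, smul_smul]
    simp
  simp only [hKH, smul_mul_assoc, mul_smul_comm, ← smul_sub, heisenbergPicture_smul,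
    Matrix.smul_apply, smul_eq_mul, sub_zero]
  rw [intervalIntegral.integral_const_mul, ← Matrix.heisenbergPicture_sub_heisenbergPicture_apply,
    Matrix.sub_apply, ← mul_assoc, Complex.I_mul_I]
  ring
end

section
/- Let A_1,…,A_N and B_1,…,B_N be D×D complex matrices and for δ ∈ ℝ set Z_J(δ) = A_J + δ B_J, V(δ) = exp(Z_1(δ)) · exp(Z_2(δ)) ··· exp(Z_N(δ)) (ordered product), and W_J(δ) = exp(Z_{J+1}(δ)) ··· exp(Z_N(δ)) (the ordered product of the factors to the right of the J-th, with W_N(δ) = 1). Then δ ↦ V(δ) is differentiable and its derivative is V′(δ) = V(δ) · Σ_{J=1}^N W_J(δ)^{−1} · ( ∫_0^1 exp(−s Z_J(δ)) · B_J · exp(s Z_J(δ)) ds ) · W_J(δ). -/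
/-!
Since `exp (-s X) exp (s Y)` has `s`-derivative `exp (-s X) (Y - X) exp (s Y)`, the fundamental
theorem of calculus gives `exp Y - exp X = exp X ∫₀¹ exp (-s X) (Y - X) exp (s Y) ds` in any real
Banach algebra. Dividing by `t - t₀` for `X = Z t₀`, `Y = Z t` and letting `t → t₀` (the integral
is jointly continuous in the difference quotient and in `Y`) yields Duhamel's formula
`(exp ∘ Z)' = exp Z ∫₀¹ exp (-s Z) Z' exp (s Z) ds` for any differentiable path `Z`. The Leibniz
rule for the ordered product `V = e₁ ⋯ e_N` gives `V' = Σ_J (e₁ ⋯ e_{J-1}) e_J' W_J`, and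
`e₁ ⋯ e_{J-1} e_J = V W_J⁻¹` puts the `J`-th term into the stated form.
-/

open NormedSpace

/-- Componentwise (interval) integral of a matrix-valued function. -/
noncomputable def matIntegral {D : ℕ} (F : ℝ → Matrix (Fin D) (Fin D) ℂ) (a b : ℝ) :
    Matrix (Fin D) (Fin D) ℂ :=
  Matrix.of fun i j => ∫ s in a..b, F s i j

theorem List.prod_ofFn_eq_prod_take_mul_mul_prod_drop {M : Type*} [Monoid M] {n : ℕ}
    (g : Fin n → M) (k : Fin n) :
    (List.ofFn g).prod =
      ((List.ofFn g).take k).prod * g k * ((List.ofFn g).drop (k + 1)).prod := by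
  have hk : g k = (List.ofFn g)[(k : ℕ)]'(by simp) := by simp
  rw [hk, ← List.prod_take_succ, List.prod_take_mul_prod_drop]

theorem Matrix.prod_ofFn_mul_nonsing_inv_prod_drop {m R : Type*} [Fintype m] [DecidableEq m]
    [CommRing R] {n : ℕ} (g : Fin n → Matrix m m R) (hg : ∀ k, IsUnit (g k)) (k : Fin n) :
    (List.ofFn g).prod * ((List.ofFn g).drop (k + 1)).prod⁻¹ =
      ((List.ofFn g).take k).prod * g k := by
  have hW : IsUnit ((List.ofFn g).drop (k + 1)).prod := by
    refine List.prod_isUnit fun M hM => ?_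
    obtain ⟨k', rfl⟩ := List.mem_ofFn.mp (List.mem_of_mem_drop hM)
    exact hg k'
  rw [List.prod_ofFn_eq_prod_take_mul_mul_prod_drop g k,
    Matrix.mul_nonsing_inv_cancel_right _ _ ((Matrix.isUnit_iff_isUnit_det _).mp hW)]

theorem HasDerivAt.list_ofFn_prod {𝕜 𝔸 : Type*} [NontriviallyNormedField 𝕜] [NormedRing 𝔸]
    [NormedAlgebra 𝕜 𝔸] {n : ℕ} {f : Fin n → 𝕜 → 𝔸} {f' : Fin n → 𝔸} {x : 𝕜}
    (h : ∀ i, HasDerivAt (f i) (f' i) x) :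
    HasDerivAt (fun t => (List.ofFn fun i => f i t).prod)
      (∑ i : Fin n, ((List.ofFn fun j => f j x).take i).prod * f' i *
        ((List.ofFn fun j => f j x).drop (i + 1)).prod) x := by
  induction n with
  | zero => simpa using hasDerivAt_const x (1 : 𝔸)
  | succ n ih =>
    simp only [List.ofFn_succ, List.prod_cons]
    refine ((h 0).mul (ih fun i => h i.succ)).congr_deriv ?_
    simp [Fin.sum_univ_succ, Finset.mul_sum, mul_assoc]

section BanachAlgebra

variable {𝔸 : Type*} [NormedRing 𝔸] [NormedAlgebra ℝ 𝔸] [CompleteSpace 𝔸]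

theorem exp_sub_exp_eq_mul_integral (X Y : 𝔸) :
    exp Y - exp X = exp X * ∫ s in (0 : ℝ)..1, exp ((-s) • X) * (Y - X) * exp (s • Y) := by
  let +nondep : NormedAlgebra ℚ 𝔸 := .restrictScalars ℚ ℝ 𝔸
  have hderiv (s : ℝ) : HasDerivAt (fun s : ℝ => exp ((-s) • X) * exp (s • Y))
      (exp ((-s) • X) * (Y - X) * exp (s • Y)) s := by
    have hX := (hasDerivAt_exp_smul_const X (-s)).scomp s (hasDerivAt_neg s)
    have hY := hasDerivAt_exp_smul_const' (𝕂 := ℝ) Y s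
    refine (hX.mul hY).congr_deriv ?_
    simp only [neg_one_smul]
    noncomm_ring
  have hcont : Continuous fun s : ℝ => exp ((-s) • X) * (Y - X) * exp (s • Y) := by fun_prop
  rw [intervalIntegral.integral_eq_sub_of_hasDerivAt (fun s _ => hderiv s)
    (hcont.intervalIntegrable 0 1)]
  simp only [neg_zero, zero_smul, exp_zero, mul_one, mul_sub, ← mul_assoc, neg_smul, one_smul,
    ← exp_add_of_commute (Commute.neg_right (Commute.refl X)), add_neg_cancel, one_mul]

theorem HasDerivAt.normedSpace_exp {Z : ℝ → 𝔸} {Z' : 𝔸} {t : ℝ} (hZ : HasDerivAt Z Z' t) :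
    HasDerivAt (fun x => NormedSpace.exp (Z x))
      (NormedSpace.exp (Z t) *
        ∫ s in (0 : ℝ)..1, NormedSpace.exp ((-s) • Z t) * Z' * NormedSpace.exp (s • Z t)) t := by
  let +nondep : NormedAlgebra ℚ 𝔸 := .restrictScalars ℚ ℝ 𝔸
  set G : 𝔸 × 𝔸 → 𝔸 := fun p => NormedSpace.exp (Z t) *
    ∫ s in (0 : ℝ)..1, NormedSpace.exp ((-s) • Z t) * p.1 * NormedSpace.exp (s • p.2)
  have hG : Continuous G := by
    refine continuous_const.mul
      (intervalIntegral.continuous_parametric_intervalIntegral_of_continuous' ?_ 0 1)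
    fun_prop
  have hslope (x : ℝ) : slope (fun x => NormedSpace.exp (Z x)) t x = G (slope Z t x, Z x) := by
    simp only [G, slope_def_module, exp_sub_exp_eq_mul_integral, mul_smul_comm, smul_mul_assoc,
      intervalIntegral.integral_smul]
  have hlim : Filter.Tendsto (fun x => (slope Z t x, Z x)) (nhdsWithin t {t}ᶜ)
      (nhds (Z', Z t)) :=
    (hasDerivAt_iff_tendsto_slope.mp hZ).prodMk_nhds
      (hZ.continuousAt.tendsto.mono_left nhdsWithin_le_nhds)
  rw [hasDerivAt_iff_tendsto_slope, funext hslope]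
  exact (hG.tendsto _).comp hlim

end BanachAlgebra

section Matrix

-- Any Banach-algebra norm on matrices would do: the entrywise statements below do not see it.
attribute [local instance] Matrix.linftyOpNormedRing Matrix.linftyOpNormedAlgebra

theorem matIntegral_eq_intervalIntegral {D : ℕ} {F : ℝ → Matrix (Fin D) (Fin D) ℂ}
    (hF : Continuous F) (a b : ℝ) :
    matIntegral F a b = ∫ s in a..b, F s := by
  ext i j
  exact (Matrix.entryLinearMap ℝ ℂ i j).toContinuousLinearMap.intervalIntegral_comp_comm
    (hF.intervalIntegrable a b)

theorem HasDerivAt.matrix_apply {m : Type*} [Fintype m] [DecidableEq m]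
    {f : ℝ → Matrix m m ℂ} {f' : Matrix m m ℂ} {x : ℝ} (h : HasDerivAt f f' x) (i j : m) :
    HasDerivAt (fun t => f t i j) (f' i j) x :=
  (Matrix.entryLinearMap ℝ ℂ i j).toContinuousLinearMap.hasFDerivAt.comp_hasDerivAt x h

/-- **Derivative of a product of matrix exponentials.**
With `Z_J(δ) = A_J + δ B_J`, `V(δ) = exp(Z_1(δ)) ⋯ exp(Z_N(δ))` and
`W_J(δ) = exp(Z_{J+1}(δ)) ⋯ exp(Z_N(δ))`, the map `δ ↦ V(δ)` is differentiable with
derivative `V(δ) Σ_J W_J(δ)⁻¹ (∫_0^1 exp(−s Z_J(δ)) B_J exp(s Z_J(δ)) ds) W_J(δ)`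
(componentwise). -/
theorem hasDerivAt_prod_exp {D N : ℕ} (A B : Fin N → Matrix (Fin D) (Fin D) ℂ) :
    letI Z : Fin N → ℝ → Matrix (Fin D) (Fin D) ℂ := fun J δ => A J + δ • B J
    letI V : ℝ → Matrix (Fin D) (Fin D) ℂ :=
      fun δ => (List.ofFn fun J => NormedSpace.exp (Z J δ)).prod
    letI W : Fin N → ℝ → Matrix (Fin D) (Fin D) ℂ :=
      fun J δ => ((List.ofFn fun J' => NormedSpace.exp (Z J' δ)).drop ((J : ℕ) + 1)).prod
    ∀ (δ : ℝ) (i j : Fin D),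
      HasDerivAt (fun δ' => V δ' i j)
        ((V δ *
            ∑ J : Fin N,
              (W J δ)⁻¹ *
                matIntegral
                  (fun s =>
                    NormedSpace.exp ((-s) • Z J δ) * B J * NormedSpace.exp (s • Z J δ))
                  0 1 *
                W J δ) i j)
        δ := by
  intro δ i j
  dsimp only
  have hZ (J : Fin N) : HasDerivAt (fun δ => A J + δ • B J) (B J) δ :=
    (((hasDerivAt_id' δ).smul_const (B J)).const_add (A J)).congr_deriv (one_smul ℝ _)
  have hV := HasDerivAt.list_ofFn_prod fun J => (hZ J).normedSpace_exp
  refine (hV.congr_deriv ?_).matrix_apply i j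
  rw [Finset.mul_sum]
  refine Finset.sum_congr rfl fun J _ => ?_
  have hVW := Matrix.prod_ofFn_mul_nonsing_inv_prod_drop _
    (fun J => Matrix.isUnit_exp (A J + δ • B J)) J
  rw [matIntegral_eq_intervalIntegral (by fun_prop), ← mul_assoc, ← mul_assoc, ← mul_assoc, hVW]
  rfl

end Matrix
end
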